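/- arXiv:2106.04949 — 3 statements merged into one kernel-verified Lean document; each statement's English description precedes it below -/
import Mathlib

section
/- Let Δt > 0 and let w_{n-1}, w_n, w_{n+1} be elements of a real inner product space. Then ((3/2·w_{n+1} − 2·w_n + 1/2·w_{n−1})/Δt, 3/2·w_{n+1} − w_n + 1/2·w_{n−1}) = (1/Δt)·‖[w_{n+1}; w_n]‖_G² − (1/Δt)·‖[w_n; w_{n−1}]‖_G² + (1/(4Δt))·‖w_{n+1} − 2w_n + w_{n−1}‖_F², where ‖[u;v]‖_G² = (3/2)‖u‖² − (3/2)(u,v) + (1/2)‖v‖² and ‖w‖_F² = 3‖w‖². -/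
/-! The left-hand side is `Δt⁻¹` times a `Δt`-free quadratic form in `(w_{n+1}, w_n, w_{n-1})`;
expanding both sides through bilinearity of the inner product shows that this form is the
difference of the two G-norms plus `3/4 ‖w_{n+1} - 2 w_n + w_{n-1}‖²`
(the G-stability identity of the BDF2 scheme). -/

open RealInnerProductSpace

theorem real_inner_bdf2_eq {H : Type*} [NormedAddCommGroup H] [InnerProductSpace ℝ H]
    (u v w : H) :
    ⟪(3 / 2 : ℝ) • u - (2 : ℝ) • v + (1 / 2 : ℝ) • w, (3 / 2 : ℝ) • u - v + (1 / 2 : ℝ) • w⟫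
      = ((3 / 2) * ‖u‖ ^ 2 - (3 / 2) * ⟪u, v⟫ + (1 / 2) * ‖v‖ ^ 2)
        - ((3 / 2) * ‖v‖ ^ 2 - (3 / 2) * ⟪v, w⟫ + (1 / 2) * ‖w‖ ^ 2)
        + (3 / 4) * ‖u - (2 : ℝ) • v + w‖ ^ 2 := by
  simp only [← real_inner_self_eq_norm_sq, inner_add_left, inner_add_right, inner_sub_left,
    inner_sub_right, real_inner_smul_left, real_inner_smul_right, real_inner_comm u v,
    real_inner_comm u w, real_inner_comm v w]
  ring

theorem stmt_3_general {H : Type*} [NormedAddCommGroup H] [InnerProductSpace ℝ H]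
    (Δt : ℝ) (wm w0 w1 : H) :
    (inner ℝ (Δt⁻¹ • ((3 / 2 : ℝ) • w1 - (2 : ℝ) • w0 + (1 / 2 : ℝ) • wm))
        ((3 / 2 : ℝ) • w1 - w0 + (1 / 2 : ℝ) • wm) : ℝ)
      = (1 / Δt) * ((3 / 2) * ‖w1‖ ^ 2 - (3 / 2) * (inner ℝ w1 w0 : ℝ) + (1 / 2) * ‖w0‖ ^ 2)
        - (1 / Δt) * ((3 / 2) * ‖w0‖ ^ 2 - (3 / 2) * (inner ℝ w0 wm : ℝ) + (1 / 2) * ‖wm‖ ^ 2)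
        + (1 / (4 * Δt)) * (3 * ‖w1 - (2 : ℝ) • w0 + wm‖ ^ 2) := by
  rw [real_inner_smul_left, real_inner_bdf2_eq]
  ring

/-- the G-norm / F-norm identity for the filtered scheme:
`((3/2 w_{n+1} − 2 w_n + 1/2 w_{n−1})/Δt , 3/2 w_{n+1} − w_n + 1/2 w_{n−1})
 = (1/Δt)‖[w_{n+1};w_n]‖_G² − (1/Δt)‖[w_n;w_{n−1}]‖_G² + (1/(4Δt))‖w_{n+1}−2w_n+w_{n−1}‖_F²`
with `‖[u;v]‖_G² = (3/2)‖u‖² − (3/2)(u,v) + (1/2)‖v‖²` and `‖w‖_F² = 3‖w‖²`. -/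
theorem stmt_3 {H : Type*} [NormedAddCommGroup H] [InnerProductSpace ℝ H]
    (Δt : ℝ) (hΔt : 0 < Δt) (wm w0 w1 : H) :
    (inner ℝ (Δt⁻¹ • ((3 / 2 : ℝ) • w1 - (2 : ℝ) • w0 + (1 / 2 : ℝ) • wm))
        ((3 / 2 : ℝ) • w1 - w0 + (1 / 2 : ℝ) • wm) : ℝ)
      = (1 / Δt) * ((3 / 2) * ‖w1‖ ^ 2 - (3 / 2) * (inner ℝ w1 w0 : ℝ) + (1 / 2) * ‖w0‖ ^ 2)
        - (1 / Δt) * ((3 / 2) * ‖w0‖ ^ 2 - (3 / 2) * (inner ℝ w0 wm : ℝ) + (1 / 2) * ‖wm‖ ^ 2)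
        + (1 / (4 * Δt)) * (3 * ‖w1 - (2 : ℝ) • w0 + wm‖ ^ 2) :=
  stmt_3_general Δt wm w0 w1
end

section
/- In dimension d = 2 or 3, for the EMAC trilinear form c(u,v,w) = 2(D(u)v, w) + ((∇·u)v, w), any constant vector e ∈ R^d, the rotational field φ(x) = x × e, and any smooth compactly supported u on Ω, one has c(u, u, φ) = 0. -/
/-!
The integrand of `c(u, u, φ)` is the divergence of the flux `(u·φ) u + ½ |u|² φ`: expanding
`∇·((u·φ) u + ½|u|² φ)` produces `2 (D(u) u, φ) + (∇·u)(u·φ)` plus the two terms `(u·∇φ)·u` and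
`½ |u|² ∇·φ`, and both vanish because `∇φ` is skew-symmetric. The flux is `C¹` and compactly
supported, so its divergence integrates to zero.
-/

open Finset MeasureTheory
open scoped Matrix

section IntegralFDeriv

variable {E F : Type*} [NormedAddCommGroup E] [NormedSpace ℝ E] [NormedAddCommGroup F]
  [NormedSpace ℝ F] [MeasurableSpace E] {μ : Measure E}

theorem ContDiff.integrable_fderiv_apply [OpensMeasurableSpace E] [IsFiniteMeasureOnCompacts μ]
    {f : E → F} (hf : ContDiff ℝ 1 f) (hfs : HasCompactSupport f) (v : E) :
    Integrable (fun x => fderiv ℝ f x v) μ :=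
  ((hf.continuous_fderiv one_ne_zero).clm_apply continuous_const).integrable_of_hasCompactSupport
    (hfs.fderiv_apply (𝕜 := ℝ) v)

theorem ContDiff.integral_fderiv_apply_eq_zero [FiniteDimensional ℝ E] [BorelSpace E]
    [μ.IsAddHaarMeasure] {f : E → ℝ} (hf : ContDiff ℝ 1 f) (hfs : HasCompactSupport f) (v : E) :
    ∫ x, fderiv ℝ f x v ∂μ = 0 := by
  have := integral_mul_fderiv_eq_neg_fderiv_mul_of_integrable (μ := μ)
    (f := fun _ => (1 : ℝ)) (g := f) (v := v) (by simp)
    (by simpa using hf.integrable_fderiv_apply hfs v)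
    (by simpa using hf.continuous.integrable_of_hasCompactSupport hfs)
    (fun _ _ => differentiableAt_const _) (fun x _ => hf.differentiable one_ne_zero x)
  simpa using this

end IntegralFDeriv

section DotProduct

variable {ι E : Type*} [Fintype ι] [NormedAddCommGroup E] [NormedSpace ℝ E] {f g : E → ι → ℝ}

theorem ContDiff.dotProduct {n : WithTop ℕ∞} (hf : ContDiff ℝ n f) (hg : ContDiff ℝ n g) :
    ContDiff ℝ n (fun y => f y ⬝ᵥ g y) :=
  ContDiff.sum fun i _ => (contDiff_pi.1 hf i).mul (contDiff_pi.1 hg i)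

theorem DifferentiableAt.dotProduct {x : E} (hf : DifferentiableAt ℝ f x)
    (hg : DifferentiableAt ℝ g x) : DifferentiableAt ℝ (fun y => f y ⬝ᵥ g y) x :=
  DifferentiableAt.fun_sum fun i _ =>
    (differentiableAt_pi.1 hf i).fun_mul (differentiableAt_pi.1 hg i)

theorem fderiv_dotProduct_apply {x : E} (hf : DifferentiableAt ℝ f x)
    (hg : DifferentiableAt ℝ g x) (w : E) :
    fderiv ℝ (fun y => f y ⬝ᵥ g y) x w = fderiv ℝ f x w ⬝ᵥ g x + f x ⬝ᵥ fderiv ℝ g x w := by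
  have hfi (i : ι) : DifferentiableAt ℝ (fun y => f y i) x := differentiableAt_pi.1 hf i
  have hgi (i : ι) : DifferentiableAt ℝ (fun y => g y i) x := differentiableAt_pi.1 hg i
  simp only [_root_.dotProduct]
  rw [fderiv_fun_sum fun i _ => (hfi i).fun_mul (hgi i), _root_.sum_apply, ← sum_add_distrib]
  refine sum_congr rfl fun i _ => ?_
  rw [fderiv_fun_mul (hfi i) (hgi i), fderiv_apply hf, fderiv_apply hg]
  simp only [add_apply, smul_apply, smul_eq_mul, ContinuousLinearMap.comp_apply,
    ContinuousLinearMap.proj_apply]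
  ring

end DotProduct

section VectorCalculus

variable {ι : Type*} [Fintype ι] [DecidableEq ι]

theorem sum_mul_apply_single_dotProduct (A : (ι → ℝ) →L[ℝ] ι → ℝ) (a p : ι → ℝ) :
    ∑ j, a j * (A (Pi.single j 1) ⬝ᵥ p) = A a ⬝ᵥ p := by
  conv_rhs => rw [← univ_sum_single a]
  simp only [map_sum, sum_dotProduct]
  refine sum_congr rfl fun j _ => ?_
  rw [← smul_eq_mul, ← smul_dotProduct, ← map_smul, ← Pi.single_smul', smul_eq_mul, mul_one]

noncomputable def divergence (F : (ι → ℝ) → ι → ℝ) (x : ι → ℝ) : ℝ :=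
  ∑ j, fderiv ℝ (fun y => F y j) x (Pi.single j 1)

/-- `D(u) = (∇u + (∇u)ᵀ) / 2`, with `(∇u) i j = ∂ⱼ uᵢ`. -/
noncomputable def symmGrad (u : (ι → ℝ) → ι → ℝ) (x : ι → ℝ) : Matrix ι ι ℝ :=
  fun i j => (fderiv ℝ (fun y => u y i) x (Pi.single j 1)
    + fderiv ℝ (fun y => u y j) x (Pi.single i 1)) / 2

theorem divergence_eq_sum_fderiv {F : (ι → ℝ) → ι → ℝ} {x : ι → ℝ}
    (hF : DifferentiableAt ℝ F x) : divergence F x = ∑ j, fderiv ℝ F x (Pi.single j 1) j := by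
  simp [divergence, fderiv_apply hF]

theorem two_mul_symmGrad_mulVec_dotProduct {u : (ι → ℝ) → ι → ℝ} {x : ι → ℝ}
    (hu : DifferentiableAt ℝ u x) (a p : ι → ℝ) :
    2 * (symmGrad u x *ᵥ a ⬝ᵥ p) = fderiv ℝ u x a ⬝ᵥ p + fderiv ℝ u x p ⬝ᵥ a := by
  rw [← sum_mul_apply_single_dotProduct, ← sum_mul_apply_single_dotProduct]
  simp only [symmGrad, fderiv_apply hu, ContinuousLinearMap.comp_apply,
    ContinuousLinearMap.proj_apply, dotProduct, Matrix.mulVec, mul_sum, sum_mul, mul_add, add_mul,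
    add_div, sum_add_distrib]
  congr 1
  · rw [sum_comm]
    exact sum_congr rfl fun _ _ => sum_congr rfl fun _ _ => by ring
  · exact sum_congr rfl fun _ _ => sum_congr rfl fun _ _ => by ring

theorem ContDiff.continuous_divergence {F : (ι → ℝ) → ι → ℝ} (hF : ContDiff ℝ 1 F) :
    Continuous (divergence F) :=
  continuous_finsetSum _ fun j _ =>
    ((contDiff_pi.1 hF j).continuous_fderiv one_ne_zero).clm_apply continuous_const

theorem ContDiff.continuous_symmGrad {u : (ι → ℝ) → ι → ℝ} (hu : ContDiff ℝ 1 u) :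
    Continuous (symmGrad u) := by
  have hpartial (i j : ι) : Continuous fun x => fderiv ℝ (fun y => u y i) x (Pi.single j 1) :=
    ((contDiff_pi.1 hu i).continuous_fderiv one_ne_zero).clm_apply continuous_const
  exact continuous_pi fun i => continuous_pi fun j =>
    ((hpartial i j).add (hpartial j i)).div_const 2

theorem ContDiff.integral_divergence_eq_zero {μ : Measure (ι → ℝ)} [μ.IsAddHaarMeasure]
    {F : (ι → ℝ) → ι → ℝ} (hF : ContDiff ℝ 1 F) (hFs : HasCompactSupport F) :
    ∫ x, divergence F x ∂μ = 0 := by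
  have hFj (j : ι) : ContDiff ℝ 1 (fun y => F y j) := contDiff_pi.1 hF j
  have hFsj (j : ι) : HasCompactSupport (fun y => F y j) :=
    hFs.comp_left (g := fun v : ι → ℝ => v j) rfl
  unfold divergence
  rw [integral_finsetSum _ fun j _ => (hFj j).integrable_fderiv_apply (hFsj j) _]
  exact sum_eq_zero fun j _ => (hFj j).integral_fderiv_apply_eq_zero (hFsj j) _

end VectorCalculus

section EmacFlux

variable {ι : Type*} [Fintype ι] {u φ : (ι → ℝ) → ι → ℝ}

noncomputable def emacFlux (u φ : (ι → ℝ) → ι → ℝ) (y : ι → ℝ) : ι → ℝ :=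
  (u y ⬝ᵥ φ y) • u y + (2⁻¹ * (u y ⬝ᵥ u y)) • φ y

theorem ContDiff.emacFlux (hu : ContDiff ℝ 1 u) (hφ : ContDiff ℝ 1 φ) :
    ContDiff ℝ 1 (emacFlux u φ) :=
  ((hu.dotProduct hφ).smul hu).add ((contDiff_const.mul (hu.dotProduct hu)).smul hφ)

theorem HasCompactSupport.emacFlux (hus : HasCompactSupport u) (φ : (ι → ℝ) → ι → ℝ) :
    HasCompactSupport (emacFlux u φ) :=
  hus.mono fun y hy huy => hy (by simp [_root_.emacFlux, huy])

theorem DifferentiableAt.emacFlux {x : ι → ℝ} (hu : DifferentiableAt ℝ u x)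
    (hφ : DifferentiableAt ℝ φ x) : DifferentiableAt ℝ (emacFlux u φ) x :=
  ((hu.dotProduct hφ).smul hu).add (((hu.dotProduct hu).const_mul (2⁻¹ : ℝ)).smul hφ)

theorem fderiv_emacFlux_apply {x : ι → ℝ} (hu : DifferentiableAt ℝ u x)
    (hφ : DifferentiableAt ℝ φ x) (w : ι → ℝ) :
    fderiv ℝ (emacFlux u φ) x w =
      (fderiv ℝ u x w ⬝ᵥ φ x + u x ⬝ᵥ fderiv ℝ φ x w) • u x + (u x ⬝ᵥ φ x) • fderiv ℝ u x w
        + (fderiv ℝ u x w ⬝ᵥ u x) • φ x + (2⁻¹ * (u x ⬝ᵥ u x)) • fderiv ℝ φ x w := by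
  have huφ := hu.dotProduct hφ
  have huu := (hu.dotProduct hu).const_mul (2⁻¹ : ℝ)
  unfold emacFlux
  rw [fderiv_fun_add (huφ.fun_smul hu) (huu.fun_smul hφ), add_apply, fderiv_fun_smul huφ hu,
    fderiv_fun_smul huu hφ, fderiv_const_mul (hu.dotProduct hu), add_apply, add_apply]
  simp only [smul_apply, ContinuousLinearMap.smulRight_apply, fderiv_dotProduct_apply hu hφ,
    fderiv_dotProduct_apply hu hu, dotProduct_comm (u x) (fderiv ℝ u x w), smul_eq_mul]
  module

variable [DecidableEq ι]

theorem divergence_emacFlux {x : ι → ℝ} (hu : DifferentiableAt ℝ u x)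
    (hφ : DifferentiableAt ℝ φ x) (hskew : ∀ v, fderiv ℝ φ x v ⬝ᵥ v = 0) :
    divergence (emacFlux u φ) x =
      2 * (symmGrad u x *ᵥ u x ⬝ᵥ φ x) + divergence u x * (u x ⬝ᵥ φ x) := by
  have hskew_diag (j : ι) : fderiv ℝ φ x (Pi.single j 1) j = 0 := by
    simpa only [dotProduct_single_one] using hskew (Pi.single j 1)
  have hskew_quad : ∑ j, u x j * (fderiv ℝ φ x (Pi.single j 1) ⬝ᵥ u x) = 0 := by
    rw [sum_mul_apply_single_dotProduct, hskew]
  rw [divergence_eq_sum_fderiv (hu.emacFlux hφ), divergence_eq_sum_fderiv hu,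
    two_mul_symmGrad_mulVec_dotProduct hu, ← sum_mul_apply_single_dotProduct,
    ← sum_mul_apply_single_dotProduct (fderiv ℝ u x) (φ x)]
  simp only [fderiv_emacFlux_apply hu hφ, Pi.add_apply, Pi.smul_apply, smul_eq_mul, hskew_diag,
    mul_zero, sum_add_distrib, add_mul, add_zero, sum_mul, mul_comm (u x _), mul_comm (φ x _),
    mul_comm (u x ⬝ᵥ φ x), dotProduct_comm (u x) (fderiv ℝ φ x _)] at hskew_quad ⊢
  linear_combination hskew_quad

end EmacFlux

theorem hasFDerivAt_crossProduct_left (e x : Fin 3 → ℝ) :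
    HasFDerivAt (fun y => crossProduct y e)
      (LinearMap.toContinuousLinearMap ((crossProduct (R := ℝ)).flip e)) x :=
  (LinearMap.toContinuousLinearMap ((crossProduct (R := ℝ)).flip e)).hasFDerivAt

theorem fderiv_crossProduct_left_apply_dotProduct_self (e x v : Fin 3 → ℝ) :
    fderiv ℝ (fun y => crossProduct y e) x v ⬝ᵥ v = 0 := by
  rw [(hasFDerivAt_crossProduct_left e x).fderiv]
  exact (dotProduct_comm _ _).trans (dot_self_cross v e)

open MeasureTheory in
/-- angular momentum conservation of the EMAC nonlinearity:
`c(u, u, φ) = 0` for `φ(x) = x × e` and smooth compactly supported `u` in 3D. -/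
theorem stmt_10 (u : (Fin 3 → ℝ) → (Fin 3 → ℝ)) (e : Fin 3 → ℝ)
    (hu : ContDiff ℝ 1 u) (hus : HasCompactSupport u) :
    2 * (∫ x : Fin 3 → ℝ, ∑ i,
        (∑ j, ((fderiv ℝ (fun y => u y i) x (Pi.single j 1)
            + fderiv ℝ (fun y => u y j) x (Pi.single i 1)) / 2) * u x j)
          * (crossProduct x e) i)
      + (∫ x : Fin 3 → ℝ,
          (∑ j, fderiv ℝ (fun y => u y j) x (Pi.single j 1))
            * (∑ i, u x i * (crossProduct x e) i)) = 0 := by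
  set φ : (Fin 3 → ℝ) → Fin 3 → ℝ := fun y => crossProduct y e
  change 2 * (∫ x, symmGrad u x *ᵥ u x ⬝ᵥ φ x) + ∫ x, divergence u x * (u x ⬝ᵥ φ x) = 0
  have hφ : ContDiff ℝ 1 φ :=
    (LinearMap.toContinuousLinearMap ((crossProduct (R := ℝ)).flip e)).contDiff
  have integrable_of_vanishing (g : (Fin 3 → ℝ) → ℝ) (hg : Continuous g)
      (hg0 : ∀ x, u x = 0 → g x = 0) : Integrable g :=
    hg.integrable_of_hasCompactSupport (hus.mono fun x hgx hux => hgx (hg0 x hux))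
  have hsymm := integrable_of_vanishing (fun x => symmGrad u x *ᵥ u x ⬝ᵥ φ x)
    ((hu.continuous_symmGrad.matrix_mulVec hu.continuous).dotProduct hφ.continuous)
    (fun x hux => by simp [hux])
  have hdiv := integrable_of_vanishing (fun x => divergence u x * (u x ⬝ᵥ φ x))
    (hu.continuous_divergence.mul (hu.continuous.dotProduct hφ.continuous))
    (fun x hux => by simp [hux])
  have hpointwise (x : Fin 3 → ℝ) :
      2 * (symmGrad u x *ᵥ u x ⬝ᵥ φ x) + divergence u x * (u x ⬝ᵥ φ x)
        = divergence (emacFlux u φ) x :=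
    (divergence_emacFlux (hu.differentiable one_ne_zero x) (hφ.differentiable one_ne_zero x)
      (fderiv_crossProduct_left_apply_dotProduct_self e x)).symm
  rw [← integral_const_mul, ← integral_add (hsymm.const_mul 2) hdiv]
  simp only [hpointwise]
  exact (hu.emacFlux hφ).integral_divergence_eq_zero (hus.emacFlux φ)
end

section
/- Let H be a real inner product space, ν > 0, Δt > 0, and suppose sequences u^n in H satisfy the discrete energy identity: for each n, (1/Δt)(‖[u^{n+1}; u^n]‖_G² − ‖[u^n; u^{n−1}]‖_G²) + (1/(4Δt))‖u^{n+1} − 2u^n + u^{n−1}‖_F² + ν a(F[u^{n+1}]) = L^n(F[u^{n+1}]) where a(v) ≥ 0 and |L^n(v)| ≤ f_n·√(a(v)) for some f_n ≥ 0. Then for all N, ‖[u^N; u^{N−1}]‖_G² + (νΔt/2)Σ_{n=1}^{N−1} a(F[u^{n+1}]) + (1/4)Σ_{n=1}^{N−1}‖u^{n+1} − 2u^n + u^{n−1}‖_F² ≤ ‖[u^1; u^0]‖_G² + (Δt/(2ν))Σ_{n=1}^{N−1} f_n². -/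
/-!
Multiplying the energy identity by `Δt` and absorbing the forcing with Young's inequality
`f √a ≤ (ν/2) a + f² / (2ν)` gives the one-step bound
`‖[uⁿ⁺¹; uⁿ]‖_G² + (νΔt/2) a(F[uⁿ⁺¹]) + (1/4) ‖uⁿ⁺¹ - 2uⁿ + uⁿ⁻¹‖_F²
  ≤ ‖[uⁿ; uⁿ⁻¹]‖_G² + (Δt/(2ν)) fₙ²`,
which telescopes to the global estimate.
-/

open Finset

/-- The `G`-norm squared `‖[u; v]‖_G²` of the two-step state `[u; v]`. -/
noncomputable def gNormSq {H : Type*} [NormedAddCommGroup H] [InnerProductSpace ℝ H]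
    (u v : H) : ℝ :=
  3 / 2 * ‖u‖ ^ 2 - 3 / 2 * inner ℝ u v + 1 / 2 * ‖v‖ ^ 2

lemma mul_sqrt_le_half_mul_add_sq_div {ν a f : ℝ} (hν : 0 < ν) (ha : 0 ≤ a) :
    f * √a ≤ ν / 2 * a + f ^ 2 / (2 * ν) := by
  have hsq : √a ^ 2 = a := Real.sq_sqrt ha
  have hgap : ν / 2 * a + f ^ 2 / (2 * ν) - f * √a = (f - ν * √a) ^ 2 / (2 * ν) := by
    field_simp
    linear_combination (-ν ^ 2) * hsq
  have : 0 ≤ (f - ν * √a) ^ 2 / (2 * ν) := by positivity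
  linarith

lemma add_sum_Ico_le_of_forall_succ_le {α : Type*} [AddCommMonoid α] [PartialOrder α]
    [IsOrderedAddMonoid α] {E D g : ℕ → α} {m : ℕ}
    (h : ∀ n, m ≤ n → E (n + 1) + D n ≤ E n + g n) :
    ∀ N, m ≤ N → E N + ∑ n ∈ Ico m N, D n ≤ E m + ∑ n ∈ Ico m N, g n := by
  intro N hN
  induction N, hN using Nat.le_induction with
  | base => simp
  | succ N hmN ih =>
    rw [sum_Ico_succ_top hmN, sum_Ico_succ_top hmN]
    calc E (N + 1) + (∑ n ∈ Ico m N, D n + D N)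
        = E (N + 1) + D N + ∑ n ∈ Ico m N, D n := by abel
      _ ≤ E N + g N + ∑ n ∈ Ico m N, D n := add_le_add_left (h N hmN) _
      _ = E N + ∑ n ∈ Ico m N, D n + g N := by abel
      _ ≤ E m + ∑ n ∈ Ico m N, g n + g N := add_le_add_left ih _
      _ = E m + (∑ n ∈ Ico m N, g n + g N) := by abel

lemma energy_step_le {ν Δt E₀ E₁ S A ℓ f : ℝ} (hν : 0 < ν) (hΔt : 0 < Δt) (hA : 0 ≤ A)
    (hℓ : ℓ ≤ f * √A) (h : 1 / Δt * (E₁ - E₀) + 1 / (4 * Δt) * S + ν * A = ℓ) :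
    E₁ + (ν * Δt / 2 * A + 1 / 4 * S) ≤ E₀ + Δt / (2 * ν) * f ^ 2 := by
  have hscaled : E₁ - E₀ + 1 / 4 * S + ν * Δt * A = Δt * ℓ := by
    rw [← h]
    field_simp
  have hforcing : Δt * ℓ ≤ Δt * (ν / 2 * A + f ^ 2 / (2 * ν)) :=
    mul_le_mul_of_nonneg_left (hℓ.trans (mul_sqrt_le_half_mul_add_sq_div hν hA)) hΔt.le
  have hexpand : Δt * (ν / 2 * A + f ^ 2 / (2 * ν)) = ν * Δt / 2 * A + Δt / (2 * ν) * f ^ 2 := by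
    field_simp
  linarith

open Finset in
theorem stmt_15_general {H : Type*} [NormedAddCommGroup H] [InnerProductSpace ℝ H]
    (ν Δt : ℝ) (hν : 0 < ν) (hΔt : 0 < Δt)
    (u : ℕ → H) (a : H → ℝ) (L : ℕ → H → ℝ) (f : ℕ → ℝ)
    (ha : ∀ v, 0 ≤ a v)
    (hL : ∀ n v, |L n v| ≤ f n * Real.sqrt (a v))
    (hid : ∀ n : ℕ, 1 ≤ n →
      (1 / Δt) * (((3 / 2) * ‖u (n + 1)‖ ^ 2 - (3 / 2) * (inner ℝ (u (n + 1)) (u n) : ℝ)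
            + (1 / 2) * ‖u n‖ ^ 2)
          - ((3 / 2) * ‖u n‖ ^ 2 - (3 / 2) * (inner ℝ (u n) (u (n - 1)) : ℝ)
            + (1 / 2) * ‖u (n - 1)‖ ^ 2))
        + (1 / (4 * Δt)) * (3 * ‖u (n + 1) - (2 : ℝ) • u n + u (n - 1)‖ ^ 2)
        + ν * a ((3 / 2 : ℝ) • u (n + 1) - u n + (1 / 2 : ℝ) • u (n - 1))
      = L n ((3 / 2 : ℝ) • u (n + 1) - u n + (1 / 2 : ℝ) • u (n - 1))) :
    ∀ N : ℕ, 1 ≤ N →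
      ((3 / 2) * ‖u N‖ ^ 2 - (3 / 2) * (inner ℝ (u N) (u (N - 1)) : ℝ)
          + (1 / 2) * ‖u (N - 1)‖ ^ 2)
        + (ν * Δt / 2) * ∑ n ∈ Icc 1 (N - 1),
            a ((3 / 2 : ℝ) • u (n + 1) - u n + (1 / 2 : ℝ) • u (n - 1))
        + (1 / 4) * ∑ n ∈ Icc 1 (N - 1),
            (3 * ‖u (n + 1) - (2 : ℝ) • u n + u (n - 1)‖ ^ 2)
      ≤ ((3 / 2) * ‖u 1‖ ^ 2 - (3 / 2) * (inner ℝ (u 1) (u 0) : ℝ) + (1 / 2) * ‖u 0‖ ^ 2)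
        + (Δt / (2 * ν)) * ∑ n ∈ Icc 1 (N - 1), f n ^ 2 := by
  have hstep : ∀ n, 1 ≤ n → gNormSq (u (n + 1)) (u n)
      + (ν * Δt / 2 * a ((3 / 2 : ℝ) • u (n + 1) - u n + (1 / 2 : ℝ) • u (n - 1))
        + 1 / 4 * (3 * ‖u (n + 1) - (2 : ℝ) • u n + u (n - 1)‖ ^ 2))
      ≤ gNormSq (u n) (u (n - 1)) + Δt / (2 * ν) * f n ^ 2 := fun n hn =>
    energy_step_le hν hΔt (ha _) (le_of_abs_le (hL n _)) (hid n hn)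
  intro N hN
  have htel := add_sum_Ico_le_of_forall_succ_le (E := fun n => gNormSq (u n) (u (n - 1)))
    hstep N hN
  have hIcc : Icc 1 (N - 1) = Ico 1 N := by
    ext n
    simp only [mem_Icc, mem_Ico]
    omega
  rw [hIcc]
  rw [sum_add_distrib, ← mul_sum _ _ (ν * Δt / 2), ← mul_sum _ _ (1 / 4 : ℝ),
    ← mul_sum _ _ (Δt / (2 * ν)), ← add_assoc] at htel
  exact htel

open Finset in
/-- abstract energy stability of the filtered scheme. With
`Gsq u v = (3/2)‖u‖² − (3/2)(u,v) + (1/2)‖v‖²`, `Fsq w = 3‖w‖²` and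
`F[u^{n+1}] = (3/2)u^{n+1} − u^n + (1/2)u^{n−1}`, the per-step energy identity
together with the forcing bound yields the global energy estimate. -/
theorem stmt_15 {H : Type*} [NormedAddCommGroup H] [InnerProductSpace ℝ H]
    (ν Δt : ℝ) (hν : 0 < ν) (hΔt : 0 < Δt)
    (u : ℕ → H) (a : H → ℝ) (L : ℕ → H → ℝ) (f : ℕ → ℝ)
    (ha : ∀ v, 0 ≤ a v) (hf : ∀ n, 0 ≤ f n)
    (hL : ∀ n v, |L n v| ≤ f n * Real.sqrt (a v))
    (hid : ∀ n : ℕ, 1 ≤ n →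
      (1 / Δt) * (((3 / 2) * ‖u (n + 1)‖ ^ 2 - (3 / 2) * (inner ℝ (u (n + 1)) (u n) : ℝ)
            + (1 / 2) * ‖u n‖ ^ 2)
          - ((3 / 2) * ‖u n‖ ^ 2 - (3 / 2) * (inner ℝ (u n) (u (n - 1)) : ℝ)
            + (1 / 2) * ‖u (n - 1)‖ ^ 2))
        + (1 / (4 * Δt)) * (3 * ‖u (n + 1) - (2 : ℝ) • u n + u (n - 1)‖ ^ 2)
        + ν * a ((3 / 2 : ℝ) • u (n + 1) - u n + (1 / 2 : ℝ) • u (n - 1))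
      = L n ((3 / 2 : ℝ) • u (n + 1) - u n + (1 / 2 : ℝ) • u (n - 1))) :
    ∀ N : ℕ, 1 ≤ N →
      ((3 / 2) * ‖u N‖ ^ 2 - (3 / 2) * (inner ℝ (u N) (u (N - 1)) : ℝ)
          + (1 / 2) * ‖u (N - 1)‖ ^ 2)
        + (ν * Δt / 2) * ∑ n ∈ Icc 1 (N - 1),
            a ((3 / 2 : ℝ) • u (n + 1) - u n + (1 / 2 : ℝ) • u (n - 1))
        + (1 / 4) * ∑ n ∈ Icc 1 (N - 1),
            (3 * ‖u (n + 1) - (2 : ℝ) • u n + u (n - 1)‖ ^ 2)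
      ≤ ((3 / 2) * ‖u 1‖ ^ 2 - (3 / 2) * (inner ℝ (u 1) (u 0) : ℝ) + (1 / 2) * ‖u 0‖ ^ 2)
        + (Δt / (2 * ν)) * ∑ n ∈ Icc 1 (N - 1), f n ^ 2 :=
  stmt_15_general ν Δt hν hΔt u a L f ha hL hid
end
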